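/- arXiv:2212.02982 — 3 statements merged into one kernel-verified Lean document; each statement's English description precedes it below -/
import Mathlib

section
/- For N ≥ 1, there exists a dense G_δ subset 𝒵 of 𝒞(ℝ^N) such that for every X ∈ 𝒵 and every linear subspace L ⊆ ℝ^N, the orthogonal projection p_L(X) is zero-dimensional. -/
noncomputable def proj {N : ℕ} (L : Submodule ℝ (EuclideanSpace ℝ (Fin N))) :
    EuclideanSpace ℝ (Fin N) → EuclideanSpace ℝ (Fin N) :=
  fun x => (L.orthogonalProjection x : EuclideanSpace ℝ (Fin N))

/-- A Cantor set in ℝ^N: a non-empty compact perfect totally disconnected subset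
(equivalently, a subset homeomorphic to the middle-thirds Cantor set). -/
def IsCantorSet {N : ℕ} (A : Set (EuclideanSpace ℝ (Fin N))) : Prop :=
  A.Nonempty ∧ IsCompact A ∧ Perfect A ∧ IsTotallyDisconnected A

/-- The space `𝒞(ℝ^N)` of Cantor sets in ℝ^N, topologized via the Hausdorff metric
(as a subspace of the space of non-empty compact subsets). -/
abbrev CantorSets (N : ℕ) :=
  {K : TopologicalSpace.NonemptyCompacts (EuclideanSpace ℝ (Fin N)) //
    IsCantorSet (K : Set (EuclideanSpace ℝ (Fin N)))}

open Metric Set Filter Topology TopologicalSpace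
open scoped RealInnerProductSpace

namespace Stmt14Aux

variable {N : ℕ}

/-- The image of a set under the linear functional `⟪·, u⟫`. -/
def innerIm (u : EuclideanSpace ℝ (Fin N)) (K : Set (EuclideanSpace ℝ (Fin N))) : Set ℝ :=
  (fun x => ⟪x, u⟫) '' K

lemma core {S t : Set (EuclideanSpace ℝ (Fin N))} (htS : t ⊆ S) (ht : IsPreconnected t)
    {x y : EuclideanSpace ℝ (Fin N)} (hx : x ∈ t) (hy : y ∈ t)
    (u : EuclideanSpace ℝ (Fin N)) (hxy : ⟪x, u⟫ ≠ ⟪y, u⟫)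
    (hint : interior (innerIm u S) = ∅) : False := by
  have hcont : Continuous fun z : EuclideanSpace ℝ (Fin N) => ⟪z, u⟫ :=
    continuous_id.inner continuous_const
  have hc : IsPreconnected ((fun z => ⟪z, u⟫) '' t) := ht.image _ hcont.continuousOn
  have hoc : OrdConnected ((fun z => ⟪z, u⟫) '' t) := hc.ordConnected
  have hIcc : Icc (min ⟪x, u⟫ ⟪y, u⟫) (max ⟪x, u⟫ ⟪y, u⟫) ⊆
      (fun z => ⟪z, u⟫) '' t := by
    rcases le_total ⟪x, u⟫ ⟪y, u⟫ with h | h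
    · rw [min_eq_left h, max_eq_right h]
      exact hoc.out ⟨x, hx, rfl⟩ ⟨y, hy, rfl⟩
    · rw [min_eq_right h, max_eq_left h]
      exact hoc.out ⟨y, hy, rfl⟩ ⟨x, hx, rfl⟩
  have hsub : Ioo (min ⟪x, u⟫ ⟪y, u⟫) (max ⟪x, u⟫ ⟪y, u⟫) ⊆ interior (innerIm u S) := by
    rw [← interior_Icc]
    exact interior_mono (hIcc.trans (image_mono htS))
  rw [hint] at hsub
  have hne : (Ioo (min ⟪x, u⟫ ⟪y, u⟫) (max ⟪x, u⟫ ⟪y, u⟫)).Nonempty :=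
    nonempty_Ioo.2 (min_lt_max.2 hxy)
  obtain ⟨p, hp⟩ := hne
  exact (hsub hp).elim

/-- The genericity property: all one-dimensional linear images have empty interior. -/
def P (K : Set (EuclideanSpace ℝ (Fin N))) : Prop :=
  ∀ u : EuclideanSpace ℝ (Fin N), ‖u‖ = 1 → interior (innerIm u K) = ∅

lemma inner_diff_ne {x y : EuclideanSpace ℝ (Fin N)} (hxy : x ≠ y) :
    ⟪x, ‖x - y‖⁻¹ • (x - y)⟫ ≠ ⟪y, ‖x - y‖⁻¹ • (x - y)⟫ := by
  have hsub : x - y ≠ 0 := sub_ne_zero.2 hxy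
  intro h
  have h2 : ⟪x - y, ‖x - y‖⁻¹ • (x - y)⟫ = 0 := by
    rw [inner_sub_left, h, sub_self]
  rw [real_inner_smul_right, real_inner_self_eq_norm_mul_norm] at h2
  have hn : ‖x - y‖ ≠ 0 := norm_ne_zero_iff.2 hsub
  field_simp at h2
  exact hsub (by simpa using h2)

lemma key1 {S : Set (EuclideanSpace ℝ (Fin N))} (hP : P S) : IsTotallyDisconnected S := by
  intro t hts ht x hx y hy
  by_contra hxy
  have hsub : x - y ≠ 0 := sub_ne_zero.2 hxy
  refine core hts ht hx hy (‖x - y‖⁻¹ • (x - y)) (inner_diff_ne hxy)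
    (hP _ (norm_smul_inv_norm hsub))

lemma key1' {S : Set (EuclideanSpace ℝ (Fin N))}
    (hP : ∀ u : EuclideanSpace ℝ (Fin N), ‖u‖ = 1 →
      (∃ x ∈ S, ∃ y ∈ S, x ≠ y ∧ u = ‖x - y‖⁻¹ • (x - y)) → interior (innerIm u S) = ∅) :
    IsTotallyDisconnected S := by
  intro t hts ht x hx y hy
  by_contra hxy
  have hsub : x - y ≠ 0 := sub_ne_zero.2 hxy
  refine core hts ht hx hy (‖x - y‖⁻¹ • (x - y)) (inner_diff_ne hxy)
    (hP _ (norm_smul_inv_norm hsub) ⟨x, hts hx, y, hts hy, hxy, rfl⟩)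

lemma key2 {K : Set (EuclideanSpace ℝ (Fin N))} (hP : P K)
    (L : Submodule ℝ (EuclideanSpace ℝ (Fin N))) :
    IsTotallyDisconnected (proj L '' K) := by
  refine key1' fun u hu hex => ?_
  obtain ⟨x, hxS, y, hyS, hxy, rfl⟩ := hex
  -- `u ∈ L` since `x, y ∈ L`
  have hxL : x ∈ L := by
    obtain ⟨k, -, rfl⟩ := hxS; exact (L.orthogonalProjection k).2
  have hyL : y ∈ L := by
    obtain ⟨k, -, rfl⟩ := hyS; exact (L.orthogonalProjection k).2
  have huL : ‖x - y‖⁻¹ • (x - y) ∈ L := L.smul_mem _ (L.sub_mem hxL hyL)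
  set u := ‖x - y‖⁻¹ • (x - y)
  have him : innerIm u (proj L '' K) = innerIm u K := by
    unfold innerIm
    rw [image_image]
    refine image_congr fun k _ => ?_
    have := L.starProjection_inner_eq_zero k u huL
    have h2 : ⟪k - proj L k, u⟫ = 0 := this
    rw [inner_sub_left, sub_eq_zero] at h2
    exact h2.symm
  rw [him]
  exact hP u (norm_smul_inv_norm (sub_ne_zero.2 hxy))

/-- The "bad" sets: compacts one of whose one-dimensional images contains an
interval of length `δ`. -/
def Bad (N : ℕ) (δ : ℝ) : Set (NonemptyCompacts (EuclideanSpace ℝ (Fin N))) :=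
  {K | ∃ u : EuclideanSpace ℝ (Fin N), ‖u‖ = 1 ∧
    ∃ a : ℝ, Icc a (a + δ) ⊆ innerIm u (K : Set (EuclideanSpace ℝ (Fin N)))}

lemma isClosed_bad (N : ℕ) {δ : ℝ} (hδ : 0 < δ) : IsClosed (Bad N δ) := by
  refine IsSeqClosed.isClosed ?_
  intro Ks K hmem hlim
  have hd0 : Tendsto (fun k => hausdorffDist (Ks k : Set (EuclideanSpace ℝ (Fin N)))
      (K : Set (EuclideanSpace ℝ (Fin N)))) atTop (𝓝 0) := by
    have h := tendsto_iff_dist_tendsto_zero.1 hlim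
    simpa [NonemptyCompacts.dist_eq] using h
  obtain ⟨R, hR⟩ := K.isCompact.isBounded.subset_closedBall 0
  have hev : ∀ᶠ k in atTop, (Ks k : Set (EuclideanSpace ℝ (Fin N))) ⊆ closedBall 0 (R + 1) := by
    have h1 : ∀ᶠ k in atTop, hausdorffDist (Ks k : Set (EuclideanSpace ℝ (Fin N)))
        (K : Set (EuclideanSpace ℝ (Fin N))) < 1 :=
      hd0.eventually (gt_mem_nhds one_pos)
    filter_upwards [h1] with k hk x hx
    have hne : EMetric.hausdorffEdist (Ks k : Set (EuclideanSpace ℝ (Fin N)))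
        (K : Set (EuclideanSpace ℝ (Fin N))) ≠ ⊤ :=
      hausdorffEdist_ne_top_of_nonempty_of_bounded (Ks k).nonempty K.nonempty
        (Ks k).isCompact.isBounded K.isCompact.isBounded
    have h2 : infDist x (K : Set (EuclideanSpace ℝ (Fin N))) < 1 :=
      lt_of_le_of_lt (infDist_le_hausdorffDist_of_mem hx hne) hk
    obtain ⟨y, hyK, hxy⟩ := (infDist_lt_iff K.nonempty).1 h2
    have : dist x 0 ≤ dist x y + dist y 0 := dist_triangle _ _ _
    have hy : dist y 0 ≤ R := hR hyK
    simp only [mem_closedBall]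
    linarith
  choose u hu a ha using hmem
  have haev : ∀ᶠ k in atTop,
      (u k, a k) ∈ (sphere (0 : EuclideanSpace ℝ (Fin N)) 1) ×ˢ Icc (-(R + 1)) (R + 1) := by
    filter_upwards [hev] with k hk
    refine ⟨mem_sphere_zero_iff_norm.2 (hu k), ?_⟩
    have hak : a k ∈ innerIm (u k) (Ks k : Set (EuclideanSpace ℝ (Fin N))) :=
      ha k ⟨le_refl _, by linarith⟩
    obtain ⟨x, hx, hax⟩ := hak
    have h1 : |a k| ≤ ‖x‖ * ‖u k‖ := by rw [← hax]; exact abs_real_inner_le_norm x (u k)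
    rw [hu k, mul_one] at h1
    have h2 : ‖x‖ ≤ R + 1 := mem_closedBall_zero_iff.1 (hk hx)
    exact abs_le.1 (h1.trans h2)
  obtain ⟨⟨uL, aL⟩, hmemP, φ, hφmono, hφlim⟩ :=
    ((isCompact_sphere (0 : EuclideanSpace ℝ (Fin N)) 1).prod isCompact_Icc).tendsto_subseq'
      haev.frequently
  have hulim : Tendsto (fun k => u (φ k)) atTop (𝓝 uL) :=
    (continuous_fst.tendsto _).comp hφlim
  have halim : Tendsto (fun k => a (φ k)) atTop (𝓝 aL) :=
    (continuous_snd.tendsto _).comp hφlim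
  refine ⟨uL, mem_sphere_zero_iff_norm.1 hmemP.1, aL, ?_⟩
  intro t ht
  have htk : ∀ k, t - aL + a (φ k) ∈ Icc (a (φ k)) (a (φ k) + δ) := by
    intro k
    obtain ⟨h1, h2⟩ := ht
    constructor <;> [linarith; linarith]
  have hxex : ∀ k, ∃ x, x ∈ (Ks (φ k) : Set (EuclideanSpace ℝ (Fin N))) ∧
      ⟪x, u (φ k)⟫ = t - aL + a (φ k) := fun k => ha (φ k) (htk k)
  choose x hxmem hxval using hxex
  have hφatTop : Tendsto φ atTop atTop := hφmono.tendsto_atTop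
  have hxfreq : ∃ᶠ k in atTop, x k ∈ closedBall (0 : EuclideanSpace ℝ (Fin N)) (R + 1) := by
    refine ((hφatTop.eventually hev).mono fun k hk => hk (hxmem k)).frequently
  obtain ⟨xL, hxLball, ψ, hψmono, hxlim⟩ :=
    (isCompact_closedBall (0 : EuclideanSpace ℝ (Fin N)) (R + 1)).tendsto_subseq' hxfreq
  have hψatTop : Tendsto ψ atTop atTop := hψmono.tendsto_atTop
  have hinf0 : Tendsto (fun k => infDist (x (ψ k)) (K : Set (EuclideanSpace ℝ (Fin N))))
      atTop (𝓝 0) := by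
    refine squeeze_zero (fun k => infDist_nonneg) (fun k => ?_)
      (hd0.comp (hφatTop.comp hψatTop))
    have hne : EMetric.hausdorffEdist (Ks (φ (ψ k)) : Set (EuclideanSpace ℝ (Fin N)))
        (K : Set (EuclideanSpace ℝ (Fin N))) ≠ ⊤ :=
      hausdorffEdist_ne_top_of_nonempty_of_bounded (Ks _).nonempty K.nonempty
        (Ks _).isCompact.isBounded K.isCompact.isBounded
    exact infDist_le_hausdorffDist_of_mem (hxmem (ψ k)) hne
  have hinf : infDist xL (K : Set (EuclideanSpace ℝ (Fin N))) = 0 := by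
    have h1 : Tendsto (fun k => infDist (x (ψ k)) (K : Set (EuclideanSpace ℝ (Fin N))))
        atTop (𝓝 (infDist xL (K : Set (EuclideanSpace ℝ (Fin N))))) :=
      ((continuous_infDist_pt _).tendsto xL).comp hxlim
    exact tendsto_nhds_unique h1 hinf0
  have hxLK : xL ∈ (K : Set (EuclideanSpace ℝ (Fin N))) :=
    (K.isCompact.isClosed.mem_iff_infDist_zero K.nonempty).2 hinf
  refine ⟨xL, hxLK, ?_⟩
  have h1 : Tendsto (fun k => ⟪x (ψ k), u (φ (ψ k))⟫) atTop (𝓝 ⟪xL, uL⟫) :=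
    hxlim.inner (hulim.comp hψatTop)
  have h2 : Tendsto (fun k => t - aL + a (φ (ψ k))) atTop (𝓝 t) := by
    have hcomp : Tendsto (fun k => a (φ (ψ k))) atTop (𝓝 aL) := halim.comp hψatTop
    have h0 : Tendsto (fun _ : ℕ => t - aL) atTop (𝓝 (t - aL)) := tendsto_const_nhds
    have := h0.add hcomp
    simpa using this
  have h3 : (fun k => ⟪x (ψ k), u (φ (ψ k))⟫) = fun k => t - aL + a (φ (ψ k)) :=
    funext fun k => hxval (ψ k)
  rw [h3] at h1
  exact tendsto_nhds_unique h1 h2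

lemma perfect_univ_real : Perfect (univ : Set ℝ) := by
  refine ⟨isClosed_univ, fun x _ => ?_⟩
  rw [accPt_iff_nhds]
  intro U hU
  obtain ⟨ε, hε, hball⟩ := Metric.mem_nhds_iff.1 hU
  refine ⟨x + ε / 2, ⟨hball ?_, trivial⟩, by simp [hε.ne']⟩
  rw [mem_ball, Real.dist_eq]
  rw [abs_of_nonneg (by linarith)]
  linarith

lemma td_interior_empty {C : Set ℝ} (h : IsTotallyDisconnected C) : interior C = ∅ := by
  rw [eq_empty_iff_forall_notMem]
  intro z hz
  obtain ⟨ε, hε, hball⟩ := Metric.mem_nhds_iff.1 (mem_interior_iff_mem_nhds.1 hz)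
  have hsub : Ioo (z - ε) (z + ε) ⊆ C := by
    rw [← Real.ball_eq_Ioo]; exact hball
  have := h _ hsub isPreconnected_Ioo
  have h1 : z - ε / 2 ∈ Ioo (z - ε) (z + ε) := by constructor <;> linarith
  have h2 : z + ε / 2 ∈ Ioo (z - ε) (z + ε) := by constructor <;> linarith
  have := this h1 h2
  linarith

lemma interior_union_empty {A B : Set ℝ} (hA : IsClosed A) (hiA : interior A = ∅)
    (hiB : interior B = ∅) : interior (A ∪ B) = ∅ := by
  have hUB : interior (A ∪ B) \ A ⊆ interior B := by
    refine interior_maximal ?_ (isOpen_interior.sdiff hA)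
    rintro w ⟨hw, hwA⟩
    rcases interior_subset hw with h | h
    · exact absurd h hwA
    · exact h
  rw [hiB] at hUB
  have hsubA : interior (A ∪ B) ⊆ A := fun w hw => by
    by_contra h; exact hUB ⟨hw, h⟩
  have : interior (A ∪ B) ⊆ interior A := interior_maximal hsubA isOpen_interior
  rw [hiA] at this
  exact eq_empty_iff_forall_notMem.2 fun z hz => this hz

lemma interior_biUnion_empty {ι : Type*} {t : Set ι} (hfin : t.Finite) {F : ι → Set ℝ}
    (hcl : ∀ i ∈ t, IsClosed (F i)) (hint : ∀ i ∈ t, interior (F i) = ∅) :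
    interior (⋃ i ∈ t, F i) = ∅ := by
  revert hcl hint
  refine Set.Finite.induction_on (motive := fun s _ =>
      (∀ i ∈ s, IsClosed (F i)) → (∀ i ∈ s, interior (F i) = ∅) →
        interior (⋃ i ∈ s, F i) = ∅) t hfin (by intro _ _; simp) ?_
  intro a s ha hs ih hcl hint
  rw [biUnion_insert]
  exact interior_union_empty (hcl a (mem_insert a s)) (hint a (mem_insert a s))
    (ih (fun i hi => hcl i (mem_insert_of_mem a hi))
      (fun i hi => hint i (mem_insert_of_mem a hi)))

lemma density (N : ℕ) (hN : 1 ≤ N) (K : NonemptyCompacts (EuclideanSpace ℝ (Fin N)))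
    {r : ℝ} (hr : 0 < r) :
    ∃ C' : NonemptyCompacts (EuclideanSpace ℝ (Fin N)),
      Perfect (C' : Set (EuclideanSpace ℝ (Fin N))) ∧
      P (C' : Set (EuclideanSpace ℝ (Fin N))) ∧
      hausdorffDist (C' : Set (EuclideanSpace ℝ (Fin N)))
        (K : Set (EuclideanSpace ℝ (Fin N))) < r := by
  classical
  obtain ⟨f, -, hfc, hfi⟩ := perfect_univ_real.exists_nat_bool_injection univ_nonempty
  set c0 : ℝ := f (fun _ => false) with hc0
  obtain ⟨M, hM⟩ := (isCompact_range hfc).isBounded.subset_closedBall c0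
  set M' : ℝ := max M 1 with hM'def
  have hM'pos : 0 < M' := lt_of_lt_of_le one_pos (le_max_right M 1)
  have hMM' : range f ⊆ closedBall c0 M' :=
    hM.trans (closedBall_subset_closedBall (le_max_left M 1))
  obtain ⟨t, htK, htfin, htcov⟩ := totallyBounded_iff_subset.1 K.isCompact.totallyBounded
    _ (dist_mem_uniformity (half_pos hr))
  set e : EuclideanSpace ℝ (Fin N) := EuclideanSpace.single (⟨0, hN⟩ : Fin N) (1 : ℝ) with he_def
  have he : ‖e‖ = 1 := by
    rw [he_def, EuclideanSpace.norm_single]; norm_num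
  have he0 : e ≠ 0 := fun h => by rw [h, norm_zero] at he; norm_num at he
  set lam : ℝ := (r / 2) / M' with hlam_def
  have hlam : 0 < lam := div_pos (half_pos hr) hM'pos
  set C' : Set (EuclideanSpace ℝ (Fin N)) :=
    ⋃ y ∈ t, range (fun b : ℕ → Bool => y + (lam * (f b - c0)) • e) with hC'def
  -- membership of net points
  have hyC' : ∀ y ∈ t, y ∈ C' := by
    intro y hy
    refine mem_biUnion hy ⟨fun _ => false, ?_⟩
    show y + (lam * (f (fun _ => false) - c0)) • e = y
    rw [← hc0, sub_self, mul_zero, zero_smul, add_zero]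
  -- t is nonempty
  obtain ⟨z0, hz0⟩ := K.nonempty
  obtain ⟨y0, hy0t, -⟩ := mem_iUnion₂.1 (htcov hz0)
  -- compactness
  have hcomp : IsCompact C' := by
    refine htfin.isCompact_biUnion fun y _ => isCompact_range ?_
    exact continuous_const.add ((continuous_const.mul (hfc.sub continuous_const)).smul
      continuous_const)
  -- nonempty
  have hne : C'.Nonempty := ⟨y0, hyC' y0 hy0t⟩
  -- injectivity of the affine maps
  have hinj : ∀ y : EuclideanSpace ℝ (Fin N),
      Function.Injective (fun b : ℕ → Bool => y + (lam * (f b - c0)) • e) := by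
    intro y b b' h
    simp only [add_right_inj] at h
    have h2 : lam * (f b - c0) = lam * (f b' - c0) := by
      by_contra hne2
      have hne3 := sub_ne_zero.2 hne2
      have h3 : (lam * (f b - c0) - lam * (f b' - c0)) • e = 0 := by
        rw [sub_smul, h, sub_self]
      rcases smul_eq_zero.1 h3 with h4 | h4
      · exact hne3 h4
      · exact he0 h4
    have h5 : f b = f b' := by
      have := mul_left_cancel₀ hlam.ne' h2
      linarith
    exact hfi h5
  -- perfectness
  have hperf : Perfect C' := by
    refine ⟨hcomp.isClosed, ?_⟩
    intro z hz
    obtain ⟨y, hyt, b0, hb0⟩ : ∃ y ∈ t, ∃ b0 : ℕ → Bool,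
        y + (lam * (f b0 - c0)) • e = z := by
      obtain ⟨y, hyt, hzy⟩ := mem_iUnion₂.1 hz
      obtain ⟨b0, hb0⟩ := hzy
      exact ⟨y, hyt, b0, hb0⟩
    rw [accPt_iff_nhds]
    intro U hU
    set w : ℕ → (ℕ → Bool) := fun m => Function.update b0 m (!(b0 m)) with hw
    have hwne : ∀ m, w m ≠ b0 := by
      intro m h
      have := congrFun h m
      rw [hw] at this
      simp only [Function.update_self] at this
      exact (Bool.not_ne_self (b0 m)) this
    have hwten : Tendsto w atTop (𝓝 b0) := by
      rw [tendsto_pi_nhds]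
      intro i
      refine tendsto_atTop_of_eventually_const (i₀ := i + 1) fun m hm => ?_
      rw [hw]
      exact Function.update_of_ne (by omega) _ _
    have hzten : Tendsto (fun m => y + (lam * (f (w m) - c0)) • e) atTop (𝓝 z) := by
      rw [← hb0]
      exact tendsto_const_nhds.add
        ((((hfc.tendsto b0).comp hwten).sub tendsto_const_nhds).const_mul lam |>.smul_const e)
    have hmemU : ∀ᶠ m in atTop, y + (lam * (f (w m) - c0)) • e ∈ U :=
      hzten.eventually (eventually_of_mem hU fun x hx => hx)
    obtain ⟨m, hm⟩ := hmemU.exists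
    refine ⟨y + (lam * (f (w m) - c0)) • e, ⟨hm, mem_biUnion hyt ⟨w m, rfl⟩⟩, ?_⟩
    rw [← hb0]
    intro hcontra
    exact hwne m ((hinj y) hcontra)
  -- the genericity property P
  have hP : P C' := by
    intro u hu
    have him : innerIm u C' = ⋃ y ∈ t,
        range (fun b : ℕ → Bool => ⟪y, u⟫ + (lam * (f b - c0)) * ⟪e, u⟫) := by
      rw [hC'def]
      unfold innerIm
      rw [image_iUnion₂]
      refine iUnion₂_congr fun y hy => ?_
      rw [← range_comp]
      refine congrArg _ (funext fun b => ?_)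
      show ⟪y + (lam * (f b - c0)) • e, u⟫ = _
      rw [inner_add_left, real_inner_smul_left]
    rw [him]
    refine interior_biUnion_empty htfin (fun y _ => ?_) (fun y _ => ?_)
    · exact (isCompact_range (continuous_const.add
        ((continuous_const.mul (hfc.sub continuous_const)).mul continuous_const))).isClosed
    · by_cases heu : ⟪e, u⟫ = 0
      · have : (range fun b : ℕ → Bool => ⟪y, u⟫ + (lam * (f b - c0)) * ⟪e, u⟫) =
            {⟪y, u⟫} := by
          simp [heu]
        rw [this, interior_singleton]
      · -- the map is a continuous injection from a compact space
        have hqc : Continuous fun b : ℕ → Bool => ⟪y, u⟫ + (lam * (f b - c0)) * ⟪e, u⟫ :=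
          continuous_const.add
            ((continuous_const.mul (hfc.sub continuous_const)).mul continuous_const)
        have hqi : Function.Injective
            fun b : ℕ → Bool => ⟪y, u⟫ + (lam * (f b - c0)) * ⟪e, u⟫ := by
          intro b b' h
          simp only [add_right_inj] at h
          have h2 := mul_right_cancel₀ heu h
          have h3 := mul_left_cancel₀ hlam.ne' h2
          exact hfi (by linarith)
        have hemb := (hqc.isClosedEmbedding hqi).toIsEmbedding
        exact td_interior_empty (hemb.isTotallyDisconnected_range.2 inferInstance)
  -- Hausdorff distance
  have hdist : hausdorffDist C' (K : Set (EuclideanSpace ℝ (Fin N))) ≤ r / 2 := by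
    refine hausdorffDist_le_of_mem_dist (half_pos hr).le ?_ ?_
    · intro z hz
      obtain ⟨y, hyt, hzy⟩ := mem_iUnion₂.1 hz
      obtain ⟨b, hb⟩ := hzy
      refine ⟨y, htK hyt, ?_⟩
      rw [← hb]
      show dist (y + (lam * (f b - c0)) • e) y ≤ r / 2
      rw [dist_eq_norm, add_sub_cancel_left, norm_smul, he, mul_one, Real.norm_eq_abs,
        abs_mul, abs_of_pos hlam]
      have hfb : |f b - c0| ≤ M' := by
        have := hMM' (mem_range_self b)
        rwa [mem_closedBall, Real.dist_eq] at this
      calc lam * |f b - c0| ≤ lam * M' := by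
            exact mul_le_mul_of_nonneg_left hfb hlam.le
        _ = r / 2 := by
            rw [hlam_def]; field_simp
    · intro w hw
      obtain ⟨y, hyt, hwy⟩ := mem_iUnion₂.1 (htcov hw)
      exact ⟨y, hyC' y hyt, le_of_lt hwy⟩
  exact ⟨⟨⟨C', hcomp⟩, hne⟩, hperf, hP, lt_of_le_of_lt hdist (half_lt_self hr)⟩

lemma mem_good_of_P {K : NonemptyCompacts (EuclideanSpace ℝ (Fin N))}
    (hP : P (K : Set (EuclideanSpace ℝ (Fin N)))) (n : ℕ) :
    K ∉ Bad N (1 / (n + 1)) := by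
  rintro ⟨u, hu, a, hsub⟩
  have h1 : Ioo a (a + 1 / (n + 1)) ⊆ interior (innerIm u (K : Set (EuclideanSpace ℝ (Fin N)))) := by
    rw [← interior_Icc]
    exact interior_mono hsub
  rw [hP u hu] at h1
  have hpos : (0 : ℝ) < 1 / (n + 1) := by positivity
  have : a + 1 / (n + 1) / 2 ∈ Ioo a (a + 1 / (n + 1)) := by
    constructor <;> [linarith; linarith]
  exact h1 this

lemma P_of_mem_good {K : NonemptyCompacts (EuclideanSpace ℝ (Fin N))}
    (h : ∀ n : ℕ, K ∉ Bad N (1 / (n + 1))) :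
    P (K : Set (EuclideanSpace ℝ (Fin N))) := by
  intro u hu
  by_contra hne
  obtain ⟨z, hz⟩ := nonempty_iff_ne_empty.2 hne
  obtain ⟨ε, hε, hball⟩ := Metric.mem_nhds_iff.1 (mem_interior_iff_mem_nhds.1 hz)
  obtain ⟨n, hn⟩ := exists_nat_one_div_lt hε
  refine h n ⟨u, hu, z, ?_⟩
  intro w hw
  refine hball ?_
  rw [mem_ball, Real.dist_eq]
  obtain ⟨hw1, hw2⟩ := hw
  have hpos : (0 : ℝ) < 1 / (n + 1) := by positivity
  rw [abs_lt]
  constructor <;> [linarith; linarith]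

end Stmt14Aux

theorem stmt_14 (N : ℕ) (hN : 1 ≤ N) :
    ∃ Z : Set (CantorSets N), Dense Z ∧ IsGδ Z ∧
      ∀ X ∈ Z, ∀ L : Submodule ℝ (EuclideanSpace ℝ (Fin N)),
        IsTotallyDisconnected (proj L '' (X.1 : Set (EuclideanSpace ℝ (Fin N)))) := by
  classical
  refine ⟨⋂ n : ℕ, {X : CantorSets N | X.1 ∉ Stmt14Aux.Bad N (1 / (n + 1))}, ?_, ?_, ?_⟩
  · -- density
    rw [Metric.dense_iff]
    intro X r hr
    obtain ⟨C', hperf, hP, hdist⟩ := Stmt14Aux.density N hN X.1 hr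
    refine ⟨⟨C', C'.nonempty, C'.isCompact, hperf, Stmt14Aux.key1 hP⟩, ?_, ?_⟩
    · rw [mem_ball, Subtype.dist_eq, NonemptyCompacts.dist_eq]
      exact hdist
    · exact mem_iInter.2 fun n => Stmt14Aux.mem_good_of_P hP n
  · -- Gδ
    refine IsGδ.iInter fun n => ?_
    have hopen : IsOpen ((Stmt14Aux.Bad N (1 / (n + 1)))ᶜ) :=
      (Stmt14Aux.isClosed_bad N (by positivity)).isOpen_compl
    exact ((hopen.preimage continuous_subtype_val).isGδ)
  · -- the projection property
    intro X hX L
    have hP : Stmt14Aux.P (X.1 : Set (EuclideanSpace ℝ (Fin N))) :=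
      Stmt14Aux.P_of_mem_good (fun n => mem_iInter.1 hX n)
    exact Stmt14Aux.key2 hP L
end

section
/- For N ≥ 1, there is a dense G_δ subset 𝒜 of 𝒦(ℝ^N) such that each X ∈ 𝒜 is a Cantor set all of whose projections onto non-zero linear subspaces are Cantor sets. -/
open Metric Set Function TopologicalSpace RealInnerProductSpace Module
open scoped Classical

section Aux

variable {N : ℕ}

local notation "E" => EuclideanSpace ℝ (Fin N)

/-- A nonempty finite set as a `NonemptyCompacts`. -/
noncomputable def finNC (S : Set (EuclideanSpace ℝ (Fin N))) (hfin : S.Finite)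
    (hne : S.Nonempty) : NonemptyCompacts (EuclideanSpace ℝ (Fin N)) :=
  ⟨⟨S, hfin.isCompact⟩, hne⟩

@[simp] lemma finNC_coe (S : Set (EuclideanSpace ℝ (Fin N))) (hfin : S.Finite)
    (hne : S.Nonempty) : ((finNC S hfin hne : NonemptyCompacts E) : Set E) = S := rfl

lemma hdNeTop {A B : Set (EuclideanSpace ℝ (Fin N))} (hA : A.Nonempty) (hB : B.Nonempty)
    (bA : Bornology.IsBounded A) (bB : Bornology.IsBounded B) :
    EMetric.hausdorffEdist A B ≠ ⊤ :=
  Metric.hausdorffEdist_ne_top_of_nonempty_of_bounded hA hB bA bB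

/-- The sets `{K | hausdorffDist ↑K S < δ}` are stable under small perturbation. -/
lemma hd_lt_of_close {S : Set (EuclideanSpace ℝ (Fin N))} (hS : S.Nonempty)
    (bS : Bornology.IsBounded S) {δ : ℝ} {K K' : NonemptyCompacts (EuclideanSpace ℝ (Fin N))}
    (h : Metric.hausdorffDist (K : Set E) S < δ)
    (h2 : dist K' K < δ - Metric.hausdorffDist (K : Set E) S) :
    Metric.hausdorffDist (K' : Set E) S < δ := by
  have fin1 : EMetric.hausdorffEdist (K' : Set E) (K : Set E) ≠ ⊤ :=
    hdNeTop K'.nonempty K.nonempty K'.isCompact.isBounded K.isCompact.isBounded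
  have tri : Metric.hausdorffDist (K' : Set E) S ≤
      Metric.hausdorffDist (K' : Set E) (K : Set E) + Metric.hausdorffDist (K : Set E) S :=
    Metric.hausdorffDist_triangle fin1
  have hdist : Metric.hausdorffDist (K' : Set E) (K : Set E) = dist K' K :=
    (NonemptyCompacts.dist_eq).symm
  rw [hdist] at tri
  linarith

/-- Finite nets inside a nonempty compact set. -/
lemma exists_net (K : NonemptyCompacts (EuclideanSpace ℝ (Fin N))) {ε : ℝ} (hε : 0 < ε) :
    ∃ s : Finset (EuclideanSpace ℝ (Fin N)), s.Nonempty ∧ ↑s ⊆ (K : Set E) ∧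
      Metric.hausdorffDist (K : Set E) ↑s < ε := by
  obtain ⟨t, hts, htf, hcov⟩ := K.isCompact.finite_cover_balls (half_pos hε)
  have htne : t.Nonempty := by
    obtain ⟨x, hx⟩ := K.nonempty
    obtain ⟨y, hy, -⟩ := Set.mem_iUnion₂.1 (hcov hx)
    exact ⟨y, hy⟩
  refine ⟨htf.toFinset, by simpa using htne, by simpa using hts, ?_⟩
  have hle : Metric.hausdorffDist (K : Set E) (htf.toFinset : Set (EuclideanSpace ℝ (Fin N)))
      ≤ ε / 2 := by
    apply Metric.hausdorffDist_le_of_mem_dist (le_of_lt (half_pos hε))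
    · intro x hx
      obtain ⟨y, hy, hxy⟩ := Set.mem_iUnion₂.1 (hcov hx)
      exact ⟨y, by simpa using hy, le_of_lt (by simpa [dist_comm] using hxy)⟩
    · intro y hy
      exact ⟨y, hts (by simpa using hy), by simp [le_of_lt (half_pos hε)]⟩
  linarith [half_lt_self hε]

end Aux

section Families

variable (N : ℕ)

local notation "E" => EuclideanSpace ℝ (Fin N)

/-- Open condition forcing points of `K` to come in nearby pairs at scale `1/(n+1)`. -/
def Oset (n : ℕ) : Set (TopologicalSpace.NonemptyCompacts (EuclideanSpace ℝ (Fin N))) :=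
  {K | ∃ (s : Finset (EuclideanSpace ℝ (Fin N))) (v : EuclideanSpace ℝ (Fin N)),
    s.Nonempty ∧ 0 < ‖v‖ ∧ ‖v‖ < 1 / (2 * (n + 1)) ∧
    Metric.hausdorffDist (K : Set E) (↑s ∪ (fun x => x + v) '' ↑s) < ‖v‖ / 4}

/-- Open condition: `K` is very close to a finite set, quantitatively in terms of its
cardinality; this forbids intervals of length `1/(n+1)` in linear images. -/
def Wset (n : ℕ) : Set (TopologicalSpace.NonemptyCompacts (EuclideanSpace ℝ (Fin N))) :=
  {K | ∃ s : Finset (EuclideanSpace ℝ (Fin N)), s.Nonempty ∧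
    Metric.hausdorffDist (K : Set E) ↑s < 1 / ((n + 1) * (2 * s.card + 2))}

/-- Open condition: `K` is close to a finite set in quantitative general position. -/
def Gset (n : ℕ) : Set (TopologicalSpace.NonemptyCompacts (EuclideanSpace ℝ (Fin N))) :=
  {K | ∃ (s : Finset (EuclideanSpace ℝ (Fin N))) (δ : ℝ), s.Nonempty ∧ 0 < δ ∧
    δ < 1 / (n + 1) ∧ Metric.hausdorffDist (K : Set E) ↑s < δ ∧
    ∀ p : Fin (N + 1) → EuclideanSpace ℝ (Fin N), Function.Injective p →
      (∀ j, p j ∈ s) → ∀ u : EuclideanSpace ℝ (Fin N), ‖u‖ = 1 → ∀ a : ℝ,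
        ∃ j, δ < abs (⟪p j, u⟫ - a)}

end Families


section OpenDense

variable {N : ℕ}

local notation "E" => EuclideanSpace ℝ (Fin N)

lemma finset_min {ι : Type*} (t : Finset ι) (w : ι → ℝ) (hw : ∀ i ∈ t, 0 < w i) :
    ∃ c, 0 < c ∧ ∀ i ∈ t, c ≤ w i := by
  classical
  induction t using Finset.induction_on with
  | empty => exact ⟨1, one_pos, by simp⟩
  | insert a t ha IH =>
    obtain ⟨c, hc, hcle⟩ := IH fun i hi => hw i (Finset.mem_insert_of_mem hi)
    refine ⟨min c (w a), lt_min hc (hw a (Finset.mem_insert_self _ _)), fun i hi => ?_⟩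
    rcases Finset.mem_insert.1 hi with rfl | hi
    · exact min_le_right _ _
    · exact le_trans (min_le_left _ _) (hcle i hi)

lemma isOpen_Oset (n : ℕ) : IsOpen (Oset N n) := by
  rw [Metric.isOpen_iff]
  rintro K ⟨s, v, hsne, hv0, hvlt, hhd⟩
  have hSne : (↑s ∪ (fun x => x + v) '' ↑s : Set E).Nonempty :=
    (hsne.to_set).mono Set.subset_union_left
  have hSb : Bornology.IsBounded (↑s ∪ (fun x => x + v) '' ↑s : Set E) :=
    ((s.finite_toSet).union ((s.finite_toSet).image _)).isBounded
  refine ⟨_, sub_pos.2 hhd, fun K' hK' => ?_⟩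
  exact ⟨s, v, hsne, hv0, hvlt, hd_lt_of_close hSne hSb hhd (by simpa [Metric.mem_ball] using hK')⟩

lemma isOpen_Wset (n : ℕ) : IsOpen (Wset N n) := by
  rw [Metric.isOpen_iff]
  rintro K ⟨s, hsne, hhd⟩
  refine ⟨_, sub_pos.2 hhd, fun K' hK' => ?_⟩
  exact ⟨s, hsne, hd_lt_of_close hsne.to_set (s.finite_toSet.isBounded) hhd
    (by simpa [Metric.mem_ball] using hK')⟩

lemma isOpen_Gset (n : ℕ) : IsOpen (Gset N n) := by
  rw [Metric.isOpen_iff]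
  rintro K ⟨s, δ, hsne, hδ0, hδlt, hhd, hprop⟩
  refine ⟨_, sub_pos.2 hhd, fun K' hK' => ?_⟩
  exact ⟨s, δ, hsne, hδ0, hδlt, hd_lt_of_close hsne.to_set (s.finite_toSet.isBounded) hhd
    (by simpa [Metric.mem_ball] using hK'), hprop⟩

lemma O_preperfect (K : TopologicalSpace.NonemptyCompacts (EuclideanSpace ℝ (Fin N)))
    (h : ∀ n, K ∈ Oset N n) : Preperfect (K : Set E) := by
  rw [preperfect_iff_nhds]
  intro x hx U hU
  obtain ⟨ε, hε, hball⟩ := Metric.mem_nhds_iff.1 hU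
  obtain ⟨n, hn⟩ := exists_nat_one_div_lt hε
  obtain ⟨s, v, hsne, hv0, hvlt, hhd⟩ := h n
  set S : Set E := ↑s ∪ (fun x => x + v) '' ↑s with hS
  have hSne : S.Nonempty := (hsne.to_set).mono Set.subset_union_left
  have hSfin : S.Finite := (s.finite_toSet).union ((s.finite_toSet).image _)
  have fin1 : EMetric.hausdorffEdist (K : Set E) S ≠ ⊤ :=
    hdNeTop K.nonempty hSne K.isCompact.isBounded hSfin.isBounded
  obtain ⟨p, hpS, hxp⟩ := Metric.exists_dist_lt_of_hausdorffDist_lt hx hhd fin1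
  -- find the partner `q` of `p` at distance `‖v‖`
  obtain ⟨q, hqS, hpq⟩ : ∃ q ∈ S, dist p q = ‖v‖ := by
    rcases hpS with hp | ⟨w, hw, rfl⟩
    · exact ⟨p + v, Or.inr ⟨p, hp, rfl⟩, by simp [dist_eq_norm]⟩
    · exact ⟨w, Or.inl hw, by simp [dist_eq_norm]⟩
  obtain ⟨y, hyK, hqy⟩ := Metric.exists_dist_lt_of_hausdorffDist_lt' hqS hhd fin1
  have hpq' : dist q y < ‖v‖ / 4 := by rwa [dist_comm]
  have h1 : dist y x < ε := by
    have : dist y x ≤ dist y q + dist q p + dist p x := dist_triangle4 y q p x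
    have h2 : dist q p = ‖v‖ := by rwa [dist_comm]
    have h3 : dist p x < ‖v‖ / 4 := by rwa [dist_comm]
    have hv1 : (3 : ℝ) / 2 * ‖v‖ < 1 / (n + 1) := by
      have h4 : (0:ℝ) < (n:ℝ) + 1 := by positivity
      have h6 : ‖v‖ * (2 * ((n:ℝ) + 1)) < 1 := (lt_div_iff₀ (by positivity)).1 hvlt
      rw [lt_div_iff₀ h4]
      nlinarith
    calc dist y x ≤ dist y q + dist q p + dist p x := dist_triangle4 y q p x
      _ < ‖v‖ / 4 + ‖v‖ + ‖v‖ / 4 := by linarith [hpq', hxp]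
      _ = 3 / 2 * ‖v‖ := by ring
      _ < 1 / (n + 1) := hv1
      _ < ε := hn
  have h2 : y ≠ x := by
    intro he
    have t1 : dist p q ≤ dist p x + dist x q := dist_triangle p x q
    have t2 : dist p x < ‖v‖ / 4 := by rw [dist_comm]; exact hxp
    have t3 : dist x q < ‖v‖ / 4 := by rw [← he]; rwa [dist_comm] at hpq'
    rw [hpq] at t1
    nlinarith [hv0]
  exact ⟨y, ⟨hball (Metric.mem_ball.2 h1), hyK⟩, h2⟩

lemma W_noIcc (K : TopologicalSpace.NonemptyCompacts (EuclideanSpace ℝ (Fin N)))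
    (h : ∀ n, K ∈ Wset N n) {u : EuclideanSpace ℝ (Fin N)} (hu : ‖u‖ = 1) {a b : ℝ}
    (hab : a < b) : ¬ Set.Icc a b ⊆ (fun x => ⟪x, u⟫) '' (K : Set E) := by
  intro hsub
  obtain ⟨n, hn⟩ := exists_nat_one_div_lt (sub_pos.2 hab)
  obtain ⟨s, hsne, hhd⟩ := h n
  set m : ℝ := (s.card : ℝ) with hm
  set δ : ℝ := 1 / (((n : ℝ) + 1) * (2 * m + 2)) with hδ
  have hm0 : 0 ≤ m := Nat.cast_nonneg _
  have hn1 : (0:ℝ) < (n:ℝ) + 1 := by positivity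
  have hδ0 : 0 < δ := by positivity
  have fin1 : EMetric.hausdorffEdist (K : Set E) ↑s ≠ ⊤ :=
    hdNeTop K.nonempty hsne.to_set K.isCompact.isBounded s.finite_toSet.isBounded
  have cover : Set.Icc a b ⊆ ⋃ y ∈ s, Set.Icc (⟪y, u⟫ - δ) (⟪y, u⟫ + δ) := by
    intro t ht
    obtain ⟨x, hxK, hxt⟩ := hsub ht
    obtain ⟨y, hy, hxy⟩ := Metric.exists_dist_lt_of_hausdorffDist_lt hxK hhd fin1
    have hineq : |⟪x, u⟫ - ⟪y, u⟫| ≤ δ := by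
      have h1 : ⟪x, u⟫ - ⟪y, u⟫ = ⟪x - y, u⟫ := (inner_sub_left x y u).symm
      rw [h1]
      calc |⟪x - y, u⟫| ≤ ‖x - y‖ * ‖u‖ := abs_real_inner_le_norm _ _
        _ = dist x y := by rw [hu, mul_one, dist_eq_norm]
        _ ≤ δ := le_of_lt hxy
    rw [abs_sub_le_iff] at hineq
    refine Set.mem_iUnion₂.2 ⟨y, hy, ?_⟩
    constructor
    · rw [← hxt]; linarith [hineq.2]
    · rw [← hxt]; linarith [hineq.1]
  have vol1 := MeasureTheory.measure_mono (μ := MeasureTheory.volume) cover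
  have vol2 := MeasureTheory.measure_biUnion_finset_le (μ := MeasureTheory.volume) s
    (fun y => Set.Icc (⟪y, u⟫ - δ) (⟪y, u⟫ + δ))
  have vol3 : ∑ y ∈ s, MeasureTheory.volume (Set.Icc (⟪y, u⟫ - δ) (⟪y, u⟫ + δ))
      = s.card • ENNReal.ofReal (2 * δ) := by
    rw [Finset.sum_congr rfl fun y _ => by
      rw [Real.volume_Icc, show ⟪y, u⟫ + δ - (⟪y, u⟫ - δ) = 2 * δ by ring]]
    simp [Finset.sum_const]
  have key : ENNReal.ofReal (b - a) ≤ ENNReal.ofReal (m * (2 * δ)) := by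
    rw [← Real.volume_Icc]
    refine le_trans vol1 (le_trans vol2 ?_)
    rw [vol3, hm]
    rw [nsmul_eq_mul, ← ENNReal.ofReal_natCast, ← ENNReal.ofReal_mul (by positivity)]
  have key2 : b - a ≤ m * (2 * δ) :=
    (ENNReal.ofReal_le_ofReal_iff (by positivity)).1 key
  have key3 : m * (2 * δ) < 1 / ((n : ℝ) + 1) := by
    have e1 : m * (2 * δ) = (2 * m) / (((n:ℝ) + 1) * (2 * m + 2)) := by
      rw [hδ]
      field_simp
    rw [e1, div_lt_div_iff₀ (by positivity) hn1]
    nlinarith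
  linarith

lemma G_sep (K : TopologicalSpace.NonemptyCompacts (EuclideanSpace ℝ (Fin N)))
    (h : ∀ n, K ∈ Gset N n) {p : Fin (N + 1) → EuclideanSpace ℝ (Fin N)}
    (hinj : Function.Injective p) (hmem : ∀ j, p j ∈ (K : Set E))
    {u : EuclideanSpace ℝ (Fin N)} (hu : ‖u‖ = 1) (a : ℝ)
    (hall : ∀ j, ⟪p j, u⟫ = a) : False := by
  classical
  have pos : ∀ q ∈ (Finset.univ.filter fun q : Fin (N+1) × Fin (N+1) => q.1 ≠ q.2),
      0 < dist (p q.1) (p q.2) := by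
    intro q hq
    exact dist_pos.2 fun he => (Finset.mem_filter.1 hq).2 (hinj he)
  obtain ⟨c, hc, hcle⟩ := finset_min _ _ pos
  obtain ⟨n, hn⟩ := exists_nat_one_div_lt (show (0:ℝ) < c / 2 by linarith)
  obtain ⟨s, δ, hsne, hδ0, hδlt, hhd, hprop⟩ := h n
  have fin1 : EMetric.hausdorffEdist (K : Set E) ↑s ≠ ⊤ :=
    hdNeTop K.nonempty hsne.to_set K.isCompact.isBounded s.finite_toSet.isBounded
  choose y hy hdy using fun j => Metric.exists_dist_lt_of_hausdorffDist_lt (hmem j) hhd fin1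
  have hyinj : Function.Injective y := by
    intro j k he
    by_contra hne
    have h1 : c ≤ dist (p j) (p k) :=
      hcle (j, k) (Finset.mem_filter.2 ⟨Finset.mem_univ _, hne⟩)
    have h2 : dist (p j) (p k) ≤ dist (p j) (y j) + dist (y k) (p k) := by
      calc dist (p j) (p k) ≤ dist (p j) (y j) + dist (y j) (p k) := dist_triangle _ _ _
        _ = dist (p j) (y j) + dist (y k) (p k) := by rw [he, dist_comm]
    have := hdy j
    have := hdy k
    have hδc : δ < c / 2 := lt_trans hδlt hn
    rw [dist_comm (y k) (p k)] at h2
    linarith [hdy j, hdy k]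
  obtain ⟨j, hj⟩ := hprop y hyinj (fun j => hy j) u hu a
  have hineq : |⟪y j, u⟫ - a| ≤ δ := by
    have h1 : ⟪y j, u⟫ - a = ⟪y j - p j, u⟫ := by
      rw [inner_sub_left, hall j]
    rw [h1]
    calc |⟪y j - p j, u⟫| ≤ ‖y j - p j‖ * ‖u‖ := abs_real_inner_le_norm _ _
      _ = dist (y j) (p j) := by rw [hu, mul_one, dist_eq_norm]
      _ ≤ δ := by rw [dist_comm]; exact le_of_lt (hdy j)
  linarith

end OpenDense


section Geometry

variable {N : ℕ}

local notation "E" => EuclideanSpace ℝ (Fin N)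

lemma exists_unit (hN : 1 ≤ N) : ∃ u : EuclideanSpace ℝ (Fin N), ‖u‖ = 1 :=
  ⟨EuclideanSpace.single (⟨0, hN⟩ : Fin N) (1 : ℝ), by
    rw [EuclideanSpace.norm_single]; simp⟩

lemma not_ai_of_hyperplane (hN : 1 ≤ N) {p : Fin (N + 1) → EuclideanSpace ℝ (Fin N)}
    {u : EuclideanSpace ℝ (Fin N)} (hu : u ≠ 0) {a : ℝ} (hp : ∀ j, ⟪p j, u⟫ = a) :
    ¬ AffineIndependent ℝ p := by
  intro hai
  have h1 : N ≤ Module.finrank ℝ (vectorSpan ℝ (Set.range p)) :=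
    (affineIndependent_iff_le_finrank_vectorSpan ℝ p (Fintype.card_fin _)).1 hai
  have h2 : vectorSpan ℝ (Set.range p) ≤ (ℝ ∙ u)ᗮ := by
    apply Submodule.span_le.2
    rintro w ⟨x, hx, y, hy, rfl⟩
    obtain ⟨j, rfl⟩ := hx
    obtain ⟨k, rfl⟩ := hy
    rw [SetLike.mem_coe, Submodule.mem_orthogonal_singleton_iff_inner_left]
    show ⟪p j - p k, u⟫ = 0
    rw [inner_sub_left, hp j, hp k, sub_self]
  have h3 : Module.finrank ℝ (vectorSpan ℝ (Set.range p)) ≤ Module.finrank ℝ (ℝ ∙ u)ᗮ :=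
    Submodule.finrank_mono h2
  have h4 : Module.finrank ℝ (ℝ ∙ u) + Module.finrank ℝ (ℝ ∙ u)ᗮ = N := by
    rw [Submodule.finrank_add_finrank_orthogonal]
    simp [finrank_euclideanSpace_fin]
  rw [finrank_span_singleton hu] at h4
  omega

lemma tuple_gap (hN : 1 ≤ N) {p : Fin (N + 1) → EuclideanSpace ℝ (Fin N)}
    (hai : AffineIndependent ℝ p) :
    ∃ c, 0 < c ∧ ∀ u : EuclideanSpace ℝ (Fin N), ‖u‖ = 1 → ∀ a : ℝ,
      ∃ j, c ≤ |⟪p j, u⟫ - a| := by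
  obtain ⟨e, he⟩ := exists_unit hN
  set R : ℝ := (Finset.univ.sup' Finset.univ_nonempty fun j => ‖p j‖) + 1 with hR
  have hpR : ∀ j, ‖p j‖ ≤ R - 1 := fun j => by
    have := Finset.le_sup' (f := fun j => ‖p j‖) (Finset.mem_univ j)
    linarith [this, hR]
  have hR1 : 1 ≤ R := by linarith [norm_nonneg (p 0), hpR 0]
  set D : Set ((EuclideanSpace ℝ (Fin N)) × ℝ) :=
    Metric.sphere (0 : EuclideanSpace ℝ (Fin N)) 1 ×ˢ Set.Icc (-R) R with hD
  have hDc : IsCompact D := (isCompact_sphere 0 1).prod isCompact_Icc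
  have hDne : D.Nonempty := by
    refine ⟨(e, 0), ?_, by constructor <;> · simp; linarith⟩
    simpa [Metric.mem_sphere, dist_eq_norm] using he
  set f : (EuclideanSpace ℝ (Fin N)) × ℝ → ℝ :=
    fun z => ∑ j : Fin (N + 1), |⟪p j, z.1⟫ - z.2| with hf
  have hfc : Continuous f := by
    apply continuous_finset_sum
    intro j _
    exact ((Continuous.inner continuous_const continuous_fst).sub continuous_snd).abs
  obtain ⟨z₀, hz₀D, hmin⟩ := hDc.exists_isMinOn hDne hfc.continuousOn
  have hz₀pos : 0 < f z₀ := by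
    rcases (Finset.sum_nonneg fun j _ => abs_nonneg (⟪p j, z₀.1⟫ - z₀.2)).lt_or_eq
      with hlt | heq
    · exact hlt
    · exfalso
      have hz : ∀ j : Fin (N + 1), ⟪p j, z₀.1⟫ = z₀.2 := by
        intro j
        have := (Finset.sum_eq_zero_iff_of_nonneg
          (fun j _ => abs_nonneg (⟪p j, z₀.1⟫ - z₀.2))).1 heq.symm j (Finset.mem_univ j)
        have := abs_eq_zero.1 this
        linarith [this]
      have hz1 : ‖z₀.1‖ = 1 := by
        have := hz₀D.1
        simpa [Metric.mem_sphere, dist_eq_norm] using this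
      have hz0 : z₀.1 ≠ 0 := by
        intro h0
        rw [h0] at hz1
        simp at hz1
      exact not_ai_of_hyperplane hN hz0 hz hai
  refine ⟨min (f z₀ / (N + 1)) 1, lt_min (by positivity) one_pos, ?_⟩
  intro u hu a
  by_cases ha : |a| ≤ R
  · by_contra hcon
    push_neg at hcon
    have hDu : (u, a) ∈ D := by
      refine ⟨?_, abs_le.1 ha⟩
      simpa [Metric.mem_sphere, dist_eq_norm] using hu
    have h1 : f z₀ ≤ f (u, a) := hmin hDu
    have h2 : f (u, a) < (N + 1) * (f z₀ / (N + 1)) := by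
      have hterm : ∀ j : Fin (N + 1), |⟪p j, u⟫ - a| < f z₀ / (N + 1) :=
        fun j => lt_of_lt_of_le (hcon j) (min_le_left _ _)
      calc f (u, a) = ∑ j : Fin (N + 1), |⟪p j, u⟫ - a| := rfl
        _ < ∑ _j : Fin (N + 1), f z₀ / (N + 1) :=
            Finset.sum_lt_sum_of_nonempty Finset.univ_nonempty fun j _ => hterm j
        _ = (N + 1) * (f z₀ / (N + 1)) := by
            rw [Finset.sum_const, Finset.card_univ, Fintype.card_fin, nsmul_eq_mul]
            push_cast
            ring
    have h3 : ((N : ℝ) + 1) * (f z₀ / (N + 1)) = f z₀ := by field_simp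
    rw [h3] at h2
    linarith
  · push_neg at ha
    refine ⟨0, le_trans (min_le_right _ _) ?_⟩
    have h1 : |⟪p 0, u⟫| ≤ R - 1 := by
      calc |⟪p 0, u⟫| ≤ ‖p 0‖ * ‖u‖ := abs_real_inner_le_norm _ _
        _ = ‖p 0‖ := by rw [hu, mul_one]
        _ ≤ R - 1 := hpR 0
    have h2 : |a| - |⟪p 0, u⟫| ≤ |⟪p 0, u⟫ - a| := by
      rw [abs_sub_comm]
      exact abs_sub_abs_le_abs_sub a _
    linarith

end Geometry


section Perturb

variable {N : ℕ}

local notation "E" => EuclideanSpace ℝ (Fin N)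

lemma span_interior_empty (hN : 1 ≤ N) (t : Finset (EuclideanSpace ℝ (Fin N)))
    (ht : t.card ≤ N) :
    interior ((affineSpan ℝ (↑t : Set E) : AffineSubspace ℝ (EuclideanSpace ℝ (Fin N))) :
      Set E) = ∅ := by
  rcases t.eq_empty_or_nonempty with rfl | htne
  · simp
  · by_contra hne
    rw [← Ne, ← Set.nonempty_iff_ne_empty] at hne
    have hconv : Convex ℝ ((affineSpan ℝ (↑t : Set E) :
        AffineSubspace ℝ (EuclideanSpace ℝ (Fin N))) : Set E) :=
      (affineSpan ℝ _).convex
    have htop := hconv.interior_nonempty_iff_affineSpan_eq_top.1 hne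
    rw [AffineSubspace.affineSpan_coe] at htop
    have hdir : vectorSpan ℝ (↑t : Set E) = ⊤ := by
      rw [← direction_affineSpan, htop, AffineSubspace.direction_top]
    have hc2 : t.card = (t.card - 1) + 1 := by
      have := htne.card_pos
      omega
    have hle := finrank_vectorSpan_image_finset_le ℝ
      (id : EuclideanSpace ℝ (Fin N) → EuclideanSpace ℝ (Fin N)) t hc2
    rw [Finset.image_id] at hle
    rw [hdir, finrank_top, finrank_euclideanSpace_fin] at hle
    omega

lemma dense_compl_spans (hN : 1 ≤ N) (T : Finset (Finset (EuclideanSpace ℝ (Fin N))))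
    (hT : ∀ t ∈ T, t.card ≤ N) :
    Dense (⋃ t ∈ T, ((affineSpan ℝ (↑t : Set E) :
      AffineSubspace ℝ (EuclideanSpace ℝ (Fin N))) : Set E))ᶜ := by
  classical
  induction T using Finset.induction_on with
  | empty => simp
  | insert t T ha IH =>
    rw [Finset.set_biUnion_insert, Set.compl_union]
    refine Dense.inter_of_isOpen_left ?_
      (IH fun t' ht' => hT _ (Finset.mem_insert_of_mem ht')) ?_
    · exact interior_eq_empty_iff_dense_compl.1
        (span_interior_empty hN t (hT t (Finset.mem_insert_self _ _)))
    · exact (AffineSubspace.closed_of_finiteDimensional _).isOpen_compl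

lemma aiInsert {s : Set (EuclideanSpace ℝ (Fin N))} {q : EuclideanSpace ℝ (Fin N)}
    (hs : AffineIndependent ℝ ((↑) : s → EuclideanSpace ℝ (Fin N)))
    (hq : q ∉ affineSpan ℝ s) :
    AffineIndependent ℝ ((↑) : ↥(insert q s) → EuclideanSpace ℝ (Fin N)) := by
  classical
  have hqs : q ∉ s := fun h => hq (subset_affineSpan ℝ s h)
  set i : ↥(insert q s) := ⟨q, Set.mem_insert q s⟩ with hi
  apply AffineIndependent.affineIndependent_of_notMem_span (i := i)
  · let e : {y : ↥(insert q s) // y ≠ i} ↪ ↥s :=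
      ⟨fun y => ⟨y.1.1, by
        rcases y.1.2 with h | h
        · exact absurd (Subtype.ext h) y.2
        · exact h⟩, by
        intro y z hyz
        have h1 := congrArg (Subtype.val : ↥s → EuclideanSpace ℝ (Fin N)) hyz
        exact Subtype.ext (Subtype.ext h1)⟩
    exact hs.comp_embedding e
  · have himg : (fun x : ↥(insert q s) => (x : EuclideanSpace ℝ (Fin N))) ''
        {x | x ≠ i} = s := by
      ext z
      constructor
      · rintro ⟨⟨w, hw⟩, hne, rfl⟩
        rcases hw with h | h
        · exact absurd (Subtype.ext h) hne
        · exact h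
      · intro hz
        refine ⟨⟨z, Set.mem_insert_of_mem q hz⟩, fun h => hqs ?_, rfl⟩
        have hz2 : z = q := congrArg Subtype.val h
        rwa [hz2] at hz
    rw [himg]
    exact hq

/-- Finite sets in general position: all sub-collections of at most `N+1` points are
affinely independent. -/
def GPFinset (s : Finset (EuclideanSpace ℝ (Fin N))) : Prop :=
  ∀ t : Finset (EuclideanSpace ℝ (Fin N)), t ⊆ s → t.card ≤ N + 1 →
    AffineIndependent ℝ ((↑) : (↑t : Set E) → EuclideanSpace ℝ (Fin N))

lemma perturb (hN : 1 ≤ N) (s : Finset (EuclideanSpace ℝ (Fin N))) {ε : ℝ} (hε : 0 < ε) :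
    ∃ s' : Finset (EuclideanSpace ℝ (Fin N)), GPFinset (N := N) s' ∧
      (∀ y ∈ s', ∃ x ∈ s, dist x y < ε) ∧ (∀ x ∈ s, ∃ y ∈ s', dist x y < ε) := by
  classical
  induction s using Finset.induction_on with
  | empty =>
    refine ⟨∅, ?_, by simp, by simp⟩
    intro t ht _
    rw [Finset.subset_empty] at ht
    subst ht
    haveI : IsEmpty {x : EuclideanSpace ℝ (Fin N) //
        x ∈ (↑(∅ : Finset (EuclideanSpace ℝ (Fin N))) : Set (EuclideanSpace ℝ (Fin N)))} :=
      ⟨fun x => by simpa using x.2⟩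
    exact affineIndependent_of_subsingleton ℝ _
  | insert a s ha IH =>
    obtain ⟨s', hGP, hback, hforth⟩ := IH
    set T : Finset (Finset (EuclideanSpace ℝ (Fin N))) :=
      s'.powerset.filter (fun t => t.card ≤ N) with hT
    have hdense := dense_compl_spans hN T (fun t ht => (Finset.mem_filter.1 ht).2)
    obtain ⟨q, hq1, hq2⟩ := hdense.exists_mem_open Metric.isOpen_ball
      (U := Metric.ball a ε) (Metric.nonempty_ball.2 hε)
    refine ⟨insert q s', ?_, ?_, ?_⟩
    · intro t hts htc
      by_cases hqt : q ∈ t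
      · set t' := t.erase q with ht'
        have ht's : t' ⊆ s' := by
          intro z hz
          obtain ⟨hzne, hzt⟩ := Finset.mem_erase.1 hz
          rcases Finset.mem_insert.1 (hts hzt) with rfl | h
          · exact absurd rfl hzne
          · exact h
        have ht'c : t'.card ≤ N := by
          rw [ht', Finset.card_erase_of_mem hqt]
          omega
        have hAI : AffineIndependent ℝ ((↑) : (↑t' : Set E) → EuclideanSpace ℝ (Fin N)) :=
          hGP t' ht's (by omega)
        have hqspan : q ∉ affineSpan ℝ (↑t' : Set E) := by
          intro hmem
          apply hq1
          exact Set.mem_iUnion₂.2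
            ⟨t', Finset.mem_filter.2 ⟨Finset.mem_powerset.2 ht's, ht'c⟩, hmem⟩
        have hres := aiInsert hAI hqspan
        have hins : (insert q (↑t' : Set E)) = (↑t : Set E) := by
          rw [← Finset.coe_insert, ht', Finset.insert_erase hqt]
        rw [hins] at hres
        exact hres
      · refine hGP t (fun z hz => ?_) htc
        rcases Finset.mem_insert.1 (hts hz) with rfl | h
        · exact absurd hz hqt
        · exact h
    · intro y hy
      rcases Finset.mem_insert.1 hy with rfl | hy'
      · exact ⟨a, Finset.mem_insert_self _ _, by
          rw [dist_comm]; exact Metric.mem_ball.1 hq2⟩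
      · obtain ⟨x, hx, hd⟩ := hback y hy'
        exact ⟨x, Finset.mem_insert_of_mem hx, hd⟩
    · intro x hx
      rcases Finset.mem_insert.1 hx with rfl | hx'
      · exact ⟨q, Finset.mem_insert_self _ _, by
          rw [dist_comm]; exact Metric.mem_ball.1 hq2⟩
      · obtain ⟨y, hy, hd⟩ := hforth x hx'
        exact ⟨y, Finset.mem_insert_of_mem hy, hd⟩

lemma gp_delta (hN : 1 ≤ N) (s' : Finset (EuclideanSpace ℝ (Fin N)))
    (hgp : GPFinset (N := N) s') :
    ∃ δ, 0 < δ ∧ ∀ p : Fin (N + 1) → EuclideanSpace ℝ (Fin N), Function.Injective p →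
      (∀ j, p j ∈ s') → ∀ u : EuclideanSpace ℝ (Fin N), ‖u‖ = 1 → ∀ a : ℝ,
        ∃ j, δ < |⟪p j, u⟫ - a| := by
  classical
  have key : ∀ q : Fin (N + 1) → {x // x ∈ s'},
      Function.Injective (fun j => (q j : EuclideanSpace ℝ (Fin N))) →
      ∃ c, 0 < c ∧ ∀ u : EuclideanSpace ℝ (Fin N), ‖u‖ = 1 → ∀ a : ℝ,
        ∃ j, c ≤ |⟪(q j : EuclideanSpace ℝ (Fin N)), u⟫ - a| := by
    intro q hq
    apply tuple_gap hN
    set t : Finset (EuclideanSpace ℝ (Fin N)) :=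
      Finset.univ.image (fun j => (q j : EuclideanSpace ℝ (Fin N))) with htdef
    have hts : t ⊆ s' := by
      intro z hz
      obtain ⟨j, -, rfl⟩ := Finset.mem_image.1 hz
      exact (q j).2
    have htc : t.card ≤ N + 1 := le_trans Finset.card_image_le (by simp)
    have hAI := hgp t hts htc
    apply AffineIndependent.of_set_of_injective
      (p := fun j => (q j : EuclideanSpace ℝ (Fin N))) ?_ hq
    have hrange : Set.range (fun j => (q j : EuclideanSpace ℝ (Fin N))) = (↑t : Set E) := by
      ext z
      simp [htdef]
    rw [hrange]
    exact hAI
  set w : (Fin (N + 1) → {x // x ∈ s'}) → ℝ := fun q =>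
    if hq : Function.Injective (fun j => (q j : EuclideanSpace ℝ (Fin N))) then
      (key q hq).choose else 1 with hw
  have hwpos : ∀ q ∈ (Finset.univ : Finset (Fin (N + 1) → {x // x ∈ s'})), 0 < w q := by
    intro q _
    rw [hw]
    dsimp only
    split
    · exact (key q ‹_›).choose_spec.1
    · exact one_pos
  obtain ⟨c, hc, hcle⟩ := finset_min _ _ hwpos
  refine ⟨c / 2, by linarith, ?_⟩
  intro p hinj hmem u hu a
  set q : Fin (N + 1) → {x // x ∈ s'} := fun j => ⟨p j, hmem j⟩ with hq
  have hqinj : Function.Injective (fun j => (q j : EuclideanSpace ℝ (Fin N))) := hinj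
  obtain ⟨j, hj⟩ := (key q hqinj).choose_spec.2 u hu a
  have hcw : c ≤ w q := hcle q (Finset.mem_univ q)
  rw [hw] at hcw
  dsimp only at hcw
  rw [dif_pos hqinj] at hcw
  exact ⟨j, lt_of_lt_of_le (by linarith) (le_trans hcw hj)⟩

end Perturb


section Density

variable {N : ℕ}

local notation "E" => EuclideanSpace ℝ (Fin N)

lemma dense_Wset (n : ℕ) : Dense (Wset N n) := by
  rw [Metric.dense_iff]
  intro K r hr
  obtain ⟨s, hsne, hsub, hhd⟩ := exists_net K hr
  set K' : TopologicalSpace.NonemptyCompacts (EuclideanSpace ℝ (Fin N)) :=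
    finNC ↑s s.finite_toSet (Finset.coe_nonempty.2 hsne) with hK'
  refine ⟨K', ?_, s, hsne, ?_⟩
  · rw [Metric.mem_ball, NonemptyCompacts.dist_eq]
    simpa [hK', Metric.hausdorffDist_comm] using hhd
  · simp only [hK', finNC_coe]
    rw [Metric.hausdorffDist_self_zero]
    positivity

lemma dense_Oset (hN : 1 ≤ N) (n : ℕ) : Dense (Oset N n) := by
  rw [Metric.dense_iff]
  intro K r hr
  obtain ⟨s, hsne, hsub, hhd⟩ := exists_net K (by linarith : (0:ℝ) < r / 2)
  obtain ⟨e, he⟩ := exists_unit hN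
  set η : ℝ := min (r / 4) (1 / (4 * ((n : ℝ) + 1))) with hη
  have hη0 : 0 < η := lt_min (by linarith) (by positivity)
  set v : EuclideanSpace ℝ (Fin N) := η • e with hv
  have hvn : ‖v‖ = η := by
    rw [hv, norm_smul, he, mul_one, Real.norm_eq_abs, abs_of_pos hη0]
  set S : Set (EuclideanSpace ℝ (Fin N)) := ↑s ∪ (fun x => x + v) '' ↑s with hS
  have hSfin : S.Finite := (s.finite_toSet).union ((s.finite_toSet).image _)
  have hSne : S.Nonempty := (Finset.coe_nonempty.2 hsne).mono Set.subset_union_left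
  set K' : TopologicalSpace.NonemptyCompacts (EuclideanSpace ℝ (Fin N)) :=
    finNC S hSfin hSne with hK'
  have fin1 : EMetric.hausdorffEdist (K : Set E) ↑s ≠ ⊤ :=
    hdNeTop K.nonempty (Finset.coe_nonempty.2 hsne) K.isCompact.isBounded
      s.finite_toSet.isBounded
  refine ⟨K', ?_, s, v, hsne, by rw [hvn]; exact hη0, ?_, ?_⟩
  · rw [Metric.mem_ball, NonemptyCompacts.dist_eq]
    have hle : Metric.hausdorffDist S (K : Set E) ≤ r / 2 + η := by
      apply Metric.hausdorffDist_le_of_mem_dist (by linarith)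
      · rintro x (hx | ⟨w, hw, rfl⟩)
        · exact ⟨x, hsub hx, by simp; positivity⟩
        · refine ⟨w, hsub hw, ?_⟩
          have hwv : dist (w + v) w = η := by
            rw [dist_eq_norm]
            simp [hvn]
          rw [hwv]
          have : (0:ℝ) < r / 2 := by linarith
          linarith
      · intro y hy
        obtain ⟨z, hz, hdz⟩ := Metric.exists_dist_lt_of_hausdorffDist_lt hy hhd fin1
        exact ⟨z, Set.subset_union_left hz, by linarith⟩
    have : η ≤ r / 4 := min_le_left _ _
    calc Metric.hausdorffDist (K' : Set E) (K : Set E) = Metric.hausdorffDist S (K : Set E) :=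
          rfl
      _ ≤ r / 2 + η := hle
      _ < r := by linarith
  · rw [hvn, hη]
    calc min (r / 4) (1 / (4 * ((n : ℝ) + 1))) ≤ 1 / (4 * ((n : ℝ) + 1)) := min_le_right _ _
      _ < 1 / (2 * ((n : ℝ) + 1)) := by
          apply div_lt_div_of_pos_left one_pos (by positivity)
          have : (0:ℝ) < (n : ℝ) + 1 := by positivity
          linarith
  · show Metric.hausdorffDist (K' : Set E) S < ‖v‖ / 4
    have : Metric.hausdorffDist (K' : Set E) S = 0 := by
      simp [hK', finNC_coe, Metric.hausdorffDist_self_zero]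
    rw [this, hvn]
    linarith

lemma dense_Gset (hN : 1 ≤ N) (n : ℕ) : Dense (Gset N n) := by
  rw [Metric.dense_iff]
  intro K r hr
  obtain ⟨s, hsne, hsub, hhd⟩ := exists_net K (by linarith : (0:ℝ) < r / 3)
  obtain ⟨s', hGP, hback, hforth⟩ := perturb hN s (by linarith : (0:ℝ) < r / 3)
  have hs'ne : s'.Nonempty := by
    obtain ⟨x, hx⟩ := hsne
    obtain ⟨y, hy, -⟩ := hforth x hx
    exact ⟨y, hy⟩
  set K' : TopologicalSpace.NonemptyCompacts (EuclideanSpace ℝ (Fin N)) :=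
    finNC ↑s' s'.finite_toSet (Finset.coe_nonempty.2 hs'ne) with hK'
  obtain ⟨δ₀, hδ₀, hδprop⟩ := gp_delta hN s' hGP
  refine ⟨K', ?_, s', min δ₀ (1 / (2 * ((n : ℝ) + 1))), hs'ne,
    lt_min hδ₀ (by positivity), ?_, ?_, ?_⟩
  · rw [Metric.mem_ball, NonemptyCompacts.dist_eq]
    have h1 : Metric.hausdorffDist (↑s' : Set E) ↑s ≤ r / 3 := by
      apply Metric.hausdorffDist_le_of_mem_dist (by linarith)
      · intro y hy
        obtain ⟨x, hx, hd⟩ := hback y hy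
        exact ⟨x, hx, by rw [dist_comm]; linarith⟩
      · intro x hx
        obtain ⟨y, hy, hd⟩ := hforth x hx
        exact ⟨y, hy, le_of_lt hd⟩
    have h2 : Metric.hausdorffDist (↑s : Set E) ↑K < r / 3 := by
      rwa [Metric.hausdorffDist_comm]
    have fin2 : EMetric.hausdorffEdist (↑s' : Set E) (↑s : Set E) ≠ ⊤ :=
      hdNeTop (Finset.coe_nonempty.2 hs'ne) (Finset.coe_nonempty.2 hsne)
        s'.finite_toSet.isBounded s.finite_toSet.isBounded
    have tri : Metric.hausdorffDist (↑s' : Set E) ↑K ≤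
        Metric.hausdorffDist (↑s' : Set E) ↑s + Metric.hausdorffDist (↑s : Set E) ↑K :=
      Metric.hausdorffDist_triangle fin2
    calc Metric.hausdorffDist (K' : Set E) (K : Set E)
        = Metric.hausdorffDist (↑s' : Set E) ↑K := rfl
      _ ≤ r / 3 + r / 3 := by linarith
      _ < r := by linarith
  · calc min δ₀ (1 / (2 * ((n : ℝ) + 1))) ≤ 1 / (2 * ((n : ℝ) + 1)) := min_le_right _ _
      _ < 1 / ((n : ℝ) + 1) := by
          apply div_lt_div_of_pos_left one_pos (by positivity)
          have : (0:ℝ) < (n : ℝ) + 1 := by positivity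
          linarith
  · show Metric.hausdorffDist (K' : Set E) ↑s' < _
    have : Metric.hausdorffDist (K' : Set E) (↑s' : Set E) = 0 := by
      simp [hK', finNC_coe, Metric.hausdorffDist_self_zero]
    rw [this]
    exact lt_min hδ₀ (by positivity)
  · intro p hpinj hpmem u hu a
    obtain ⟨j, hj⟩ := hδprop p hpinj hpmem u hu a
    exact ⟨j, lt_of_le_of_lt (min_le_left _ _) hj⟩

end Density

section Final

variable {N : ℕ}

local notation "E" => EuclideanSpace ℝ (Fin N)

lemma cont_proj (L : Submodule ℝ (EuclideanSpace ℝ (Fin N))) : Continuous (proj L) :=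
  L.orthogonalProjection.continuous.subtype_val

lemma inner_proj (L : Submodule ℝ (EuclideanSpace ℝ (Fin N)))
    {u : EuclideanSpace ℝ (Fin N)} (hu : u ∈ L) (z : EuclideanSpace ℝ (Fin N)) :
    ⟪proj L z, u⟫ = ⟪z, u⟫ := by
  show ⟪L.starProjection z, u⟫ = ⟪z, u⟫
  rw [Submodule.inner_starProjection_left_eq_right, Submodule.starProjection_eq_self_iff.mpr hu]

lemma proj_top : proj (⊤ : Submodule ℝ (EuclideanSpace ℝ (Fin N))) = id := by
  funext z
  exact Submodule.starProjection_eq_self_iff.mpr Submodule.mem_top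

lemma proj_image_eq (X : Set (EuclideanSpace ℝ (Fin N)))
    (L : Submodule ℝ (EuclideanSpace ℝ (Fin N))) {u : EuclideanSpace ℝ (Fin N)}
    (hu : u ∈ L) :
    (fun x => ⟪x, u⟫) '' (proj L '' X) = (fun x => ⟪x, u⟫) '' X := by
  rw [Set.image_image]
  exact Set.image_congr fun x _ => inner_proj L hu x

lemma perfect_infinite {C : Set (EuclideanSpace ℝ (Fin N))} (hC : Perfect C)
    (hne : C.Nonempty) : C.Infinite := by
  by_contra hfin
  rw [Set.not_infinite] at hfin
  obtain ⟨z, hz⟩ := hne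
  have hacc := hC.acc z hz
  rw [accPt_principal_iff_clusterPt] at hacc
  have hmem : z ∈ closure (C \ {z}) := mem_closure_iff_clusterPt.2 hacc
  have hclosed : IsClosed (C \ {z}) := (hfin.diff (t := {z})).isClosed
  rw [hclosed.closure_eq] at hmem
  exact hmem.2 rfl

lemma td_subset {K : TopologicalSpace.NonemptyCompacts (EuclideanSpace ℝ (Fin N))}
    (hW : ∀ n, K ∈ Wset N n) (L : Submodule ℝ (EuclideanSpace ℝ (Fin N))) :
    IsTotallyDisconnected (proj L '' (K : Set E)) := by
  intro t hts htc
  intro x hx y hy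
  by_contra hxy
  have hxL : x ∈ L := by
    obtain ⟨z, hz, rfl⟩ := hts hx
    exact SetLike.coe_mem (L.orthogonalProjection z)
  have hyL : y ∈ L := by
    obtain ⟨z, hz, rfl⟩ := hts hy
    exact SetLike.coe_mem (L.orthogonalProjection z)
  set d : EuclideanSpace ℝ (Fin N) := y - x with hd
  have hd0 : d ≠ 0 := sub_ne_zero.2 (Ne.symm hxy)
  set u : EuclideanSpace ℝ (Fin N) := ‖d‖⁻¹ • d with hu
  have huL : u ∈ L := Submodule.smul_mem L _ (Submodule.sub_mem L hyL hxL)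
  have hun : ‖u‖ = 1 := norm_smul_inv_norm hd0
  have himg : IsPreconnected ((fun z => ⟪z, u⟫) '' t) :=
    htc.image _ ((Continuous.inner continuous_id continuous_const).continuousOn)
  have hlt : ⟪x, u⟫ < ⟪y, u⟫ := by
    have h1 : ⟪y, u⟫ - ⟪x, u⟫ = ⟪d, u⟫ := by
      rw [← inner_sub_left, hd]
    have h2 : ⟪d, u⟫ = ‖d‖ := by
      rw [hu, real_inner_smul_right, real_inner_self_eq_norm_mul_norm]
      field_simp
    have h3 : 0 < ‖d‖ := norm_pos_iff.2 hd0
    linarith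
  have hsub : Set.Icc ⟪x, u⟫ ⟪y, u⟫ ⊆ (fun z => ⟪z, u⟫) '' t :=
    himg.Icc_subset ⟨x, hx, rfl⟩ ⟨y, hy, rfl⟩
  have hsub2 : (fun z => ⟪z, u⟫) '' t ⊆ (fun z => ⟪z, u⟫) '' (proj L '' (K : Set E)) :=
    Set.image_mono hts
  rw [proj_image_eq _ _ huL] at hsub2
  exact W_noIcc K hW hun hlt (le_trans hsub hsub2)

lemma preperfect_proj {K : TopologicalSpace.NonemptyCompacts (EuclideanSpace ℝ (Fin N))}
    (hN : 1 ≤ N) (hO : ∀ n, K ∈ Oset N n) (hG : ∀ n, K ∈ Gset N n)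
    {L : Submodule ℝ (EuclideanSpace ℝ (Fin N))} (hL : L ≠ ⊥) :
    Preperfect (proj L '' (K : Set E)) := by
  intro x hx
  by_contra hacc
  rw [accPt_iff_nhds] at hacc
  push_neg at hacc
  obtain ⟨U, hU, hUP⟩ := hacc
  obtain ⟨v, hvL, hv0⟩ := Submodule.exists_mem_ne_zero_of_ne_bot hL
  set u : EuclideanSpace ℝ (Fin N) := ‖v‖⁻¹ • v with hu
  have huL : u ∈ L := Submodule.smul_mem _ _ hvL
  have hun : ‖u‖ = 1 := norm_smul_inv_norm hv0
  set U' := interior U with hU'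
  have hxU' : x ∈ U' := mem_interior_iff_mem_nhds.2 hU
  set F : Set (EuclideanSpace ℝ (Fin N)) := (proj L ⁻¹' U') ∩ (K : Set E) with hF
  have hFpre : Preperfect F :=
    (O_preperfect K hO).open_inter (isOpen_interior.preimage (cont_proj L))
  have hFne : F.Nonempty := by
    obtain ⟨z, hzK, hzx⟩ := hx
    exact ⟨z, by rw [Set.mem_preimage, hzx]; exact hxU', hzK⟩
  have hFeq : ∀ z ∈ F, proj L z = x := by
    intro z hz
    have h1 : proj L z ∈ U ∩ (proj L '' (K : Set E)) :=
      ⟨interior_subset hz.1, Set.mem_image_of_mem _ hz.2⟩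
    exact hUP (proj L z) h1
  have hFclosed : IsClosed F := by
    have heq : F = (proj L ⁻¹' {x}) ∩ (K : Set E) := by
      ext z
      constructor
      · intro hz
        exact ⟨hFeq z hz, hz.2⟩
      · rintro ⟨hz1, hz2⟩
        refine ⟨?_, hz2⟩
        rw [Set.mem_preimage] at hz1 ⊢
        rw [Set.mem_singleton_iff] at hz1
        rw [hz1]
        exact hxU'
    rw [heq]
    exact (isClosed_singleton.preimage (cont_proj L)).inter K.isCompact.isClosed
  have hFinf : F.Infinite := perfect_infinite ⟨hFclosed, hFpre⟩ hFne
  obtain ⟨t, htF, htcard⟩ := hFinf.exists_subset_card_eq (N + 1)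
  set g : Fin (N + 1) → ↥t := fun j => t.equivFin.symm (Fin.cast htcard.symm j) with hg
  set p : Fin (N + 1) → EuclideanSpace ℝ (Fin N) :=
    fun j => ((g j : EuclideanSpace ℝ (Fin N))) with hp
  have hpinj : Function.Injective p := by
    intro j k hjk
    have h1 : g j = g k := Subtype.ext hjk
    have h2 := t.equivFin.symm.injective h1
    exact Fin.cast_injective _ h2
  have hptF : ∀ j, p j ∈ F := fun j => htF (g j).2
  have hpmem : ∀ j, p j ∈ (K : Set E) := fun j => (hptF j).2
  have hphyp : ∀ j, ⟪p j, u⟫ = ⟪x, u⟫ := by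
    intro j
    rw [← hFeq _ (hptF j), inner_proj L huL]
  exact G_sep K hG hpinj hpmem hun ⟪x, u⟫ hphyp

end Final

theorem stmt_16 (N : ℕ) (hN : 1 ≤ N) :
    ∃ A : Set (TopologicalSpace.NonemptyCompacts (EuclideanSpace ℝ (Fin N))),
      Dense A ∧ IsGδ A ∧
      ∀ X ∈ A, IsCantorSet (X : Set (EuclideanSpace ℝ (Fin N))) ∧
        ∀ L : Submodule ℝ (EuclideanSpace ℝ (Fin N)), L ≠ ⊥ →
          IsCantorSet (proj L '' (X : Set (EuclideanSpace ℝ (Fin N)))) := by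
  classical
  refine ⟨⋂ n, (Oset N n ∩ (Wset N n ∩ Gset N n)), ?_, ?_, ?_⟩
  · apply dense_iInter_of_isOpen
    · intro n
      exact (isOpen_Oset n).inter ((isOpen_Wset n).inter (isOpen_Gset n))
    · intro n
      exact (dense_Oset hN n).inter_of_isOpen_left
        ((dense_Wset n).inter_of_isOpen_left (dense_Gset hN n) (isOpen_Wset n))
        (isOpen_Oset n)
  · exact IsGδ.iInter_of_isOpen fun n =>
      (isOpen_Oset n).inter ((isOpen_Wset n).inter (isOpen_Gset n))
  · intro X hX
    simp only [Set.mem_iInter, Set.mem_inter_iff] at hX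
    have hO : ∀ n, X ∈ Oset N n := fun n => (hX n).1
    have hW : ∀ n, X ∈ Wset N n := fun n => (hX n).2.1
    have hG : ∀ n, X ∈ Gset N n := fun n => (hX n).2.2
    have hperf : Perfect (X : Set (EuclideanSpace ℝ (Fin N))) :=
      ⟨X.isCompact.isClosed, O_preperfect X hO⟩
    have htd0 : ∀ L : Submodule ℝ (EuclideanSpace ℝ (Fin N)),
        IsTotallyDisconnected (proj L '' (X : Set (EuclideanSpace ℝ (Fin N)))) :=
      td_subset hW
    constructor
    · refine ⟨X.nonempty, X.isCompact, hperf, ?_⟩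
      have := htd0 ⊤
      rwa [proj_top, Set.image_id] at this
    · intro L hL
      exact ⟨X.nonempty.image _, X.isCompact.image (cont_proj L),
        ⟨(X.isCompact.image (cont_proj L)).isClosed, preperfect_proj hN hO hG hL⟩, htd0 L⟩
end

section
/- For every non-empty compact metric space Y embedded in a linear subspace L of ℝ^N with dim L ≤ N − 2 (N ≥ 2), there exists a Cantor set X ⊆ ℝ^N with p_L(X) = Y, constructed as the graph of a continuous surjection from the Cantor set onto Y placed in a complementary direction. -/
open Filter Topology Set

open Filter Topology Set

lemma continuous_cantorFunction {c : ℝ} (h1 : 0 ≤ c) (h2 : c < 1) :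
    Continuous (Cardinal.cantorFunction c) := by
  show Continuous fun f : ℕ → Bool => ∑' n, Cardinal.cantorFunctionAux c f n
  refine continuous_tsum (f := fun n (f : ℕ → Bool) => Cardinal.cantorFunctionAux c f n)
    (fun n => ?_) (summable_geometric_of_lt_one h1 h2) (fun n f => ?_)
  · exact (continuous_of_discreteTopology (f := fun v : Bool => cond v (c^n) (0:ℝ))).comp
      (continuous_apply n)
  · rcases Bool.eq_false_or_eq_true (f n) with h | h <;>
      simp [Cardinal.cantorFunctionAux, h, Real.norm_eq_abs, abs_of_nonneg h1, abs_pow,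
        pow_nonneg h1]

private noncomputable def rem (t : ℝ) : ℕ → ℝ
  | 0 => t
  | n+1 => if 1 ≤ rem t n then 2 * rem t n - 2 else 2 * rem t n

lemma cantorFunction_surj {t : ℝ} (h0 : 0 ≤ t) (h2 : t ≤ 2) :
    ∃ b : ℕ → Bool, Cardinal.cantorFunction (1/2) b = t := by
  classical
  set b : ℕ → Bool := fun n => decide (1 ≤ rem t n) with hb
  have hrem : ∀ n, 0 ≤ rem t n ∧ rem t n ≤ 2 := by
    intro n
    induction n with
    | zero => exact ⟨h0, h2⟩
    | succ n ih =>
      by_cases h : 1 ≤ rem t n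
      · rw [show rem t (n+1) = if 1 ≤ rem t n then 2 * rem t n - 2 else 2 * rem t n from rfl,
          if_pos h]
        constructor <;> linarith [ih.1, ih.2]
      · rw [show rem t (n+1) = if 1 ≤ rem t n then 2 * rem t n - 2 else 2 * rem t n from rfl,
          if_neg h]
        push_neg at h
        constructor <;> linarith [ih.1]
  have key : ∀ n, (∑ k ∈ Finset.range n, Cardinal.cantorFunctionAux (1/2) b k)
      + rem t n * (1/2 : ℝ)^n = t := by
    intro n
    induction n with
    | zero => simp [rem]
    | succ n ih =>
      rw [Finset.sum_range_succ]
      have hrw : rem t (n+1) = if 1 ≤ rem t n then 2 * rem t n - 2 else 2 * rem t n := rfl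
      by_cases h : 1 ≤ rem t n
      · have hbn : b n = true := by simp [hb, h]
        have step : Cardinal.cantorFunctionAux (1/2) b n + rem t (n+1) * (1/2:ℝ)^(n+1)
            = rem t n * (1/2:ℝ)^n := by
          rw [Cardinal.cantorFunctionAux_true hbn, hrw, if_pos h]; ring
        linarith [ih, step]
      · have hbn : b n = false := by simp [hb, h]
        have step : Cardinal.cantorFunctionAux (1/2) b n + rem t (n+1) * (1/2:ℝ)^(n+1)
            = rem t n * (1/2:ℝ)^n := by
          rw [Cardinal.cantorFunctionAux_false hbn, hrw, if_neg h]; ring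
        linarith [ih, step]
  refine ⟨b, ?_⟩
  have hs : Summable (Cardinal.cantorFunctionAux (1/2) b) :=
    Cardinal.summable_cantor_function b (by norm_num) (by norm_num)
  have lim1 := hs.hasSum.tendsto_sum_nat
  have lim0 : Tendsto (fun n => rem t n * (1/2 : ℝ)^n) atTop (𝓝 0) := by
    refine squeeze_zero_norm (a := fun n => 2 * (1/2 : ℝ)^n) (fun n => ?_) ?_
    · rw [Real.norm_eq_abs, abs_mul, abs_of_nonneg (hrem n).1,
        abs_of_nonneg (by positivity : (0:ℝ) ≤ (1/2:ℝ)^n)]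
      exact mul_le_mul_of_nonneg_right (hrem n).2 (by positivity)
    · have := tendsto_pow_atTop_nhds_zero_of_lt_one (by norm_num : (0:ℝ) ≤ 1/2)
        (by norm_num : (1/2:ℝ) < 1)
      simpa using this.const_mul 2
  have lim2 : Tendsto (fun n => ∑ k ∈ Finset.range n, Cardinal.cantorFunctionAux (1/2) b k)
      atTop (𝓝 t) := by
    have : (fun n => ∑ k ∈ Finset.range n, Cardinal.cantorFunctionAux (1/2) b k)
        = fun n => t - rem t n * (1/2:ℝ)^n := by
      funext n; linarith [key n]
    rw [this]
    simpa using tendsto_const_nhds.sub lim0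
  exact tendsto_nhds_unique lim1 lim2

lemma exists_cantor_surjection {N : ℕ} (hN : 0 < N) (Y : Set (EuclideanSpace ℝ (Fin N)))
    (hYc : IsCompact Y) (hYne : Y.Nonempty) :
    ∃ ψ : (ℕ → Bool) → EuclideanSpace ℝ (Fin N), Continuous ψ ∧ Set.range ψ = Y := by
  obtain ⟨C, hC⟩ := isBounded_iff_forall_norm_le.mp hYc.isBounded
  set R : ℝ := max C 1 with hR
  have hR1 : (0:ℝ) < R := lt_of_lt_of_le one_pos (le_max_right _ _)
  have hcoord : ∀ y ∈ Y, ∀ i, |y i| ≤ R := by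
    intro y hy i
    have h1 : |y i| ≤ ‖y‖ := by
      rw [EuclideanSpace.norm_eq, ← Real.sqrt_sq_eq_abs]
      apply Real.sqrt_le_sqrt
      simpa [Real.norm_eq_abs, sq_abs] using
        Finset.single_le_sum (f := fun j => ‖y j‖^2) (fun j _ => sq_nonneg _) (Finset.mem_univ i)
    exact h1.trans ((hC y hy).trans (le_max_left _ _))
  set φ : (ℕ → Bool) → EuclideanSpace ℝ (Fin N) := fun b =>
    (EuclideanSpace.equiv (Fin N) ℝ).symm
      (fun i => -R + R * Cardinal.cantorFunction (1/2) (fun k => b (k * N + i))) with hφ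
  have hφc : Continuous φ := by
    apply (EuclideanSpace.equiv (Fin N) ℝ).symm.continuous.comp
    apply continuous_pi
    intro i
    refine continuous_const.add (continuous_const.mul ?_)
    exact (continuous_cantorFunction (by norm_num) (by norm_num)).comp
      (continuous_pi fun k => continuous_apply (k * N + i))
  have hsurj : ∀ y ∈ Y, ∃ b, φ b = y := by
    intro y hy
    have hti : ∀ i : Fin N, ∃ c : ℕ → Bool,
        Cardinal.cantorFunction (1/2) c = (y i + R)/R := by
      intro i
      have := abs_le.1 (hcoord y hy i)
      apply cantorFunction_surj
      · apply div_nonneg _ hR1.le; linarith [this.1]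
      · rw [div_le_iff₀ hR1]; linarith [this.2]
    choose c hc using hti
    refine ⟨fun m => c ⟨m % N, Nat.mod_lt _ hN⟩ (m / N), ?_⟩
    ext i
    show -R + R * Cardinal.cantorFunction (1/2)
        (fun k => c ⟨(k * N + ↑i) % N, _⟩ ((k * N + ↑i) / N)) = y i
    have hslice : (fun k => c ⟨(k * N + (i:ℕ)) % N, Nat.mod_lt _ hN⟩ ((k * N + (i:ℕ)) / N))
        = c i := by
      funext k
      have hiN : (i:ℕ) < N := i.isLt
      have h1 : (k * N + (i:ℕ)) % N = (i:ℕ) := by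
        rw [add_comm, Nat.add_mul_mod_self_right, Nat.mod_eq_of_lt hiN]
      have h2 : (k * N + (i:ℕ)) / N = k := by
        rw [mul_comm, Nat.mul_add_div hN, Nat.div_eq_of_lt hiN, add_zero]
      simp only [h1, h2, Fin.eta]
    rw [hslice, hc i]
    field_simp
    ring
  have hsclosed : IsClosed (φ ⁻¹' Y) := hYc.isClosed.preimage hφc
  have hsne : (φ ⁻¹' Y).Nonempty := by
    obtain ⟨y, hy⟩ := hYne
    obtain ⟨b, hb⟩ := hsurj y hy
    exact ⟨b, by simp only [Set.mem_preimage, hb]; exact hy⟩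
  obtain ⟨r, hrs, hrange, hrc⟩ := PiNat.exists_retraction_of_isClosed hsclosed hsne
  refine ⟨φ ∘ r, hφc.comp hrc, ?_⟩
  rw [Set.range_comp, hrange]
  apply Set.Subset.antisymm
  · rintro _ ⟨b, hb, rfl⟩; exact hb
  · intro y hy
    obtain ⟨b, hb⟩ := hsurj y hy
    exact ⟨b, by simp only [Set.mem_preimage, hb]; exact hy, hb⟩

theorem stmt_19 (N : ℕ) (hN : 2 ≤ N) (L : Submodule ℝ (EuclideanSpace ℝ (Fin N)))
    (hdim : Module.finrank ℝ L ≤ N - 2)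
    (Y : Set (EuclideanSpace ℝ (Fin N))) (hYL : Y ⊆ (L : Set (EuclideanSpace ℝ (Fin N))))
    (hYc : IsCompact Y) (hYne : Y.Nonempty) :
    ∃ X : Set (EuclideanSpace ℝ (Fin N)), IsCantorSet X ∧ proj L '' X = Y := by
  classical
  have hN0 : 0 < N := by omega
  obtain ⟨ψ, hψc, hψr⟩ := exists_cantor_surjection hN0 Y hYc hYne
  have hfin : Module.finrank ℝ L + Module.finrank ℝ Lᗮ = N := by
    have := Submodule.finrank_add_finrank_orthogonal (K := L)
    rwa [finrank_euclideanSpace_fin] at this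
  have hbot : Lᗮ ≠ ⊥ := by
    intro h
    rw [h, finrank_bot] at hfin
    omega
  obtain ⟨u, huL, hu0⟩ := Submodule.exists_mem_ne_zero_of_ne_bot hbot
  set g := Cardinal.cantorFunction (1/3) with hg
  have hginj : Function.Injective g :=
    Cardinal.cantorFunction_injective (by norm_num) (by norm_num)
  have hgc : Continuous g := continuous_cantorFunction (by norm_num) (by norm_num)
  set G : (ℕ → Bool) → EuclideanSpace ℝ (Fin N) := fun b => ψ b + g b • u with hG
  have hGc : Continuous G := hψc.add (hgc.smul continuous_const)
  have hψL : ∀ b, ψ b ∈ L := fun b => hYL (hψr ▸ Set.mem_range_self b)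
  have hGinj : Function.Injective G := by
    intro b b' h
    have h2 : ψ b + g b • u = ψ b' + g b' • u := h
    have key : (g b - g b') • u = ψ b' - ψ b := by
      rw [sub_smul, sub_eq_sub_iff_add_eq_add]
      exact (add_comm (g b • u) (ψ b)).trans h2
    have h0 : (g b - g b') • u = 0 := by
      refine Submodule.disjoint_def.mp (Submodule.orthogonal_disjoint L) _ ?_ ?_
      · rw [key]; exact Submodule.sub_mem L (hψL b') (hψL b)
      · exact Submodule.smul_mem _ _ huL
    rcases smul_eq_zero.mp h0 with h3 | h3
    · exact hginj (sub_eq_zero.mp h3)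
    · exact absurd h3 hu0
  have hproj : ∀ b, proj L (G b) = ψ b := by
    intro b
    show ((L.orthogonalProjection (ψ b + g b • u) : L) : EuclideanSpace ℝ (Fin N)) = ψ b
    rw [map_add, map_smul,
      Submodule.orthogonalProjectionOnto_apply_of_mem_orthogonal huL,
      smul_zero, add_zero]
    exact Submodule.starProjection_eq_self_iff.mpr (hψL b)
  have himg : proj L '' Set.range G = Y := by
    rw [← Set.range_comp, show proj L ∘ G = ψ from funext hproj, hψr]
  refine ⟨Set.range G, ⟨⟨G (fun _ => false), Set.mem_range_self _⟩,
    isCompact_range hGc, ⟨(isCompact_range hGc).isClosed, ?_⟩, ?_⟩, himg⟩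
  · rw [preperfect_iff_nhds]
    rintro x ⟨b, rfl⟩ U hU
    have htend : Tendsto (fun k => G (Function.update b k (!b k))) atTop (𝓝 (G b)) := by
      apply (hGc.continuousAt).tendsto.comp
      rw [tendsto_pi_nhds]
      intro j
      refine Filter.Tendsto.congr' ?_ tendsto_const_nhds
      filter_upwards [Filter.eventually_gt_atTop j] with k hk
      rw [Function.update_of_ne (by omega : j ≠ k)]
    have hev : ∀ᶠ k in atTop, G (Function.update b k (!b k)) ∈ U := htend.eventually_mem hU
    obtain ⟨k, hk⟩ := hev.exists
    refine ⟨G (Function.update b k (!b k)), ⟨hk, Set.mem_range_self _⟩, ?_⟩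
    intro heq
    have h1 := congrFun (hGinj heq) k
    rw [Function.update_self] at h1
    cases hbk : b k <;> rw [hbk] at h1 <;> simp at h1
  · have hemb : Topology.IsEmbedding G := (hGc.isClosedEmbedding hGinj).toIsEmbedding
    exact hemb.isTotallyDisconnected_range.mpr inferInstance
end
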